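/- Let v : S¹ → ℝ³ be a smooth stationary solution of the rescaled flow, i.e., (1/2)v + (v'×(v''×v'))/|v'|⁴ = 0 with v' ≠ 0 and v''×v' ≠ 0 everywhere. Then v·γ = 0 everywhere, where γ = (v''×v')/|v''×v'|, and consequently the curve v lies in a plane through the origin. -/

import Mathlib

open Real MeasureTheory intervalIntegral

noncomputable section

abbrev E3 := EuclideanSpace ℝ (Fin 3)

/-- The cross product on `ℝ³`. -/
def cross (a b : E3) : E3 :=
  (WithLp.equiv 2 (Fin 3 → ℝ)).symm
    ![a 1 * b 2 - a 2 * b 1, a 2 * b 0 - a 0 * b 2, a 0 * b 1 - a 1 * b 0]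

/-- The dot product on `ℝ³`. -/
def dot (a b : E3) : ℝ := a 0 * b 0 + a 1 * b 1 + a 2 * b 2

/-- Standard basis vector. -/
def e3 (j : Fin 3) : E3 := EuclideanSpace.single j 1

/-! ### Auxiliary algebraic lemmas -/

lemma crossE3_zero (a b : E3) : cross a b 0 = a 1 * b 2 - a 2 * b 1 := rfl
lemma crossE3_one (a b : E3) : cross a b 1 = a 2 * b 0 - a 0 * b 2 := rfl
lemma crossE3_two (a b : E3) : cross a b 2 = a 0 * b 1 - a 1 * b 0 := rfl

lemma ext3 {a b : E3} (h0 : a 0 = b 0) (h1 : a 1 = b 1) (h2 : a 2 = b 2) : a = b := by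
  ext i
  fin_cases i
  · exact h0
  · exact h1
  · exact h2

lemma dot_comm (a b : E3) : dot a b = dot b a := by simp only [dot]; ring

lemma dot_cross_right (a b : E3) : dot (cross a b) b = 0 := by
  simp only [dot, crossE3_zero, crossE3_one, crossE3_two]; ring

lemma dot_cross_left (a b : E3) : dot (cross a b) a = 0 := by
  simp only [dot, crossE3_zero, crossE3_one, crossE3_two]; ring

lemma dot_smul_right (a b : E3) (k : ℝ) : dot a (k • b) = k * dot a b := by
  simp only [dot, PiLp.smul_apply, smul_eq_mul]; ring

lemma dot_smul_left (a b : E3) (k : ℝ) : dot (k • a) b = k * dot a b := by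
  simp only [dot, PiLp.smul_apply, smul_eq_mul]; ring

lemma crossE3_self (a : E3) : cross a a = 0 := by
  refine ext3 ?_ ?_ ?_ <;>
    simp [crossE3_zero, crossE3_one, crossE3_two, mul_comm]

lemma dot_self_eq_zero {a : E3} : dot a a = 0 ↔ a = 0 := by
  constructor
  · intro h
    simp only [dot] at h
    have h0 : a 0 = 0 := by nlinarith [mul_self_nonneg (a 0), mul_self_nonneg (a 1), mul_self_nonneg (a 2)]
    have h1 : a 1 = 0 := by nlinarith [mul_self_nonneg (a 0), mul_self_nonneg (a 1), mul_self_nonneg (a 2)]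
    have h2 : a 2 = 0 := by nlinarith [mul_self_nonneg (a 0), mul_self_nonneg (a 1), mul_self_nonneg (a 2)]
    refine ext3 ?_ ?_ ?_ <;> simp [h0, h1, h2]
  · intro h; simp [h, dot]

lemma dot_self_pos {a : E3} (h : a ≠ 0) : 0 < dot a a := by
  have hnn : (0:ℝ) ≤ dot a a := by
    simp only [dot]
    nlinarith [mul_self_nonneg (a 0), mul_self_nonneg (a 1), mul_self_nonneg (a 2)]
  rcases hnn.lt_or_eq with h' | h'
  · exact h'
  · exact absurd (dot_self_eq_zero.mp h'.symm) h

lemma norm_eq_sqrt_dot (a : E3) : ‖a‖ = Real.sqrt (dot a a) := by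
  rw [EuclideanSpace.norm_eq]
  congr 1
  rw [Fin.sum_univ_three]
  simp only [Real.norm_eq_abs, sq_abs, dot]
  ring

lemma lagrange (a b : E3) :
    dot (cross a b) (cross a b) = dot a a * dot b b - (dot a b) ^ 2 := by
  simp only [dot, crossE3_zero, crossE3_one, crossE3_two]; ring

/-- Key orthogonal decomposition identity: if `a ⊥ b` and `z ⊥ a, b` then `z`
is proportional to `a × b`. -/
lemma decomp (a b z : E3) (hab : dot a b = 0) (hza : dot z a = 0) (hzb : dot z b = 0) :
    (dot a a * dot b b) • z = dot z (cross a b) • cross a b := by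
  refine ext3 ?_ ?_ ?_
  · simp only [PiLp.smul_apply, smul_eq_mul, dot, crossE3_zero, crossE3_one, crossE3_two] at *
    linear_combination ((a 0*b 0 + a 1*b 1 + a 2*b 2) * z 0) * hab + ((a 2*b 0 - a 0*b 2)*a 2 - (a 0*b 1 - a 1*b 0)*a 1) * hzb - ((a 2*b 0 - a 0*b 2)*b 2 - (a 0*b 1 - a 1*b 0)*b 1) * hza
  · simp only [PiLp.smul_apply, smul_eq_mul, dot, crossE3_zero, crossE3_one, crossE3_two] at *
    linear_combination ((a 0*b 0 + a 1*b 1 + a 2*b 2) * z 1) * hab + ((a 0*b 1 - a 1*b 0)*a 0 - (a 1*b 2 - a 2*b 1)*a 2) * hzb - ((a 0*b 1 - a 1*b 0)*b 0 - (a 1*b 2 - a 2*b 1)*b 2) * hza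
  · simp only [PiLp.smul_apply, smul_eq_mul, dot, crossE3_zero, crossE3_one, crossE3_two] at *
    linear_combination ((a 0*b 0 + a 1*b 1 + a 2*b 2) * z 2) * hab + ((a 1*b 2 - a 2*b 1)*a 1 - (a 2*b 0 - a 0*b 2)*a 0) * hzb - ((a 1*b 2 - a 2*b 1)*b 1 - (a 2*b 0 - a 0*b 2)*b 0) * hza

/-- If `cc` and `cc'` are both orthogonal to the nonzero orthogonal pair `a, b`
in `ℝ³` and `cc ≠ 0`, then `cc'` is proportional to `cc`. -/
lemma prop_of_biorth (a b cc cc' : E3) (ha : a ≠ 0) (hb : b ≠ 0) (hcc : cc ≠ 0)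
    (hab : dot a b = 0) (hca : dot cc a = 0) (hcb : dot cc b = 0)
    (hc'a : dot cc' a = 0) (hc'b : dot cc' b = 0) : ∃ m : ℝ, cc' = m • cc := by
  have hApos : 0 < dot a a * dot b b := mul_pos (dot_self_pos ha) (dot_self_pos hb)
  have hAc := decomp a b cc hab hca hcb
  have hAc' := decomp a b cc' hab hc'a hc'b
  have hcw_ne : dot cc (cross a b) ≠ 0 := by
    intro h
    rw [h, zero_smul] at hAc
    rcases smul_eq_zero.mp hAc with h' | h'
    · exact absurd h' (ne_of_gt hApos)
    · exact hcc h'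
  refine ⟨dot cc' (cross a b) / dot cc (cross a b), ?_⟩
  have key : (dot a a * dot b b) • cc'
      = (dot a a * dot b b) • ((dot cc' (cross a b) / dot cc (cross a b)) • cc) := by
    calc (dot a a * dot b b) • cc' = dot cc' (cross a b) • cross a b := hAc'
    _ = ((dot cc' (cross a b) / dot cc (cross a b)) * dot cc (cross a b)) • cross a b := by
        rw [div_mul_cancel₀ _ hcw_ne]
    _ = (dot cc' (cross a b) / dot cc (cross a b)) • (dot cc (cross a b) • cross a b) := by
        rw [mul_smul]
    _ = (dot cc' (cross a b) / dot cc (cross a b)) • ((dot a a * dot b b) • cc) := by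
        rw [hAc]
    _ = (dot a a * dot b b) • ((dot cc' (cross a b) / dot cc (cross a b)) • cc) := by
        rw [smul_comm]
  exact smul_right_injective E3 (ne_of_gt hApos) key

/-! ### Calculus lemmas -/

lemma hasDerivAt_E3_apply {f : ℝ → E3} {f' : E3} {x : ℝ} (i : Fin 3)
    (hf : HasDerivAt f f' x) : HasDerivAt (fun x => f x i) (f' i) x := by
  have := (EuclideanSpace.proj (𝕜 := ℝ) i).hasFDerivAt.comp_hasDerivAt x hf
  exact this

lemma hasDerivAt_E3 {F : ℝ → E3} {G : E3} {x : ℝ}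
    (h : ∀ i, HasDerivAt (fun x => F x i) (G i) x) : HasDerivAt F G x := by
  have h1 : HasDerivAt (fun x => (EuclideanSpace.equiv (Fin 3) ℝ) (F x))
      ((EuclideanSpace.equiv (Fin 3) ℝ) G) x := hasDerivAt_pi.2 h
  have h2 := ((EuclideanSpace.equiv (Fin 3) ℝ).symm :
      (Fin 3 → ℝ) →L[ℝ] E3).hasFDerivAt.comp_hasDerivAt x h1
  exact h2

lemma hasDerivAt_cross {f g : ℝ → E3} {f' g' : E3} {x : ℝ}
    (hf : HasDerivAt f f' x) (hg : HasDerivAt g g' x) :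
    HasDerivAt (fun y => cross (f y) (g y)) (cross f' (g x) + cross (f x) g') x := by
  apply hasDerivAt_E3
  intro i
  have H : ∀ j k : Fin 3, HasDerivAt (fun y => f y j * g y k)
      (f' j * g x k + f x j * g' k) x :=
    fun j k => (hasDerivAt_E3_apply j hf).mul (hasDerivAt_E3_apply k hg)
  fin_cases i
  · show HasDerivAt (fun y => cross (f y) (g y) 0) ((cross f' (g x) + cross (f x) g') 0) x
    simp only [crossE3_zero, PiLp.add_apply]
    convert ((H 1 2).sub (H 2 1)) using 1
    · rfl
    · rfl
    · rfl
    ring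
  · show HasDerivAt (fun y => cross (f y) (g y) 1) ((cross f' (g x) + cross (f x) g') 1) x
    simp only [crossE3_one, PiLp.add_apply]
    convert ((H 2 0).sub (H 0 2)) using 1
    · rfl
    · rfl
    · rfl
    ring
  · show HasDerivAt (fun y => cross (f y) (g y) 2) ((cross f' (g x) + cross (f x) g') 2) x
    simp only [crossE3_two, PiLp.add_apply]
    convert ((H 0 1).sub (H 1 0)) using 1
    · rfl
    · rfl
    · rfl
    ring

lemma hasDerivAt_dot {f g : ℝ → E3} {f' g' : E3} {x : ℝ}
    (hf : HasDerivAt f f' x) (hg : HasDerivAt g g' x) :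
    HasDerivAt (fun y => dot (f y) (g y)) (dot f' (g x) + dot (f x) g') x := by
  have H : ∀ j : Fin 3, HasDerivAt (fun y => f y j * g y j)
      (f' j * g x j + f x j * g' j) x :=
    fun j => (hasDerivAt_E3_apply j hf).mul (hasDerivAt_E3_apply j hg)
  simp only [dot]
  convert ((H 0).add (H 1)).add (H 2) using 1
  · rfl
  · rfl
  · rfl
  ring

/-- If a nonvanishing vector field on `ℝ` satisfies `c' = μ • c`, then its
normalization is constant. -/
lemma unit_const {c : ℝ → E3} {μ : ℝ → ℝ}
    (hcd : ∀ x, HasDerivAt c (μ x • c x) x) (hcne : ∀ x, c x ≠ 0) :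
    ∀ x y : ℝ, (Real.sqrt (dot (c x) (c x)))⁻¹ • c x
      = (Real.sqrt (dot (c y) (c y)))⁻¹ • c y := by
  have hqpos : ∀ x, 0 < dot (c x) (c x) := fun x => dot_self_pos (hcne x)
  have hspos : ∀ x, 0 < Real.sqrt (dot (c x) (c x)) :=
    fun x => Real.sqrt_pos.mpr (hqpos x)
  have hγ : ∀ x : ℝ, HasDerivAt
      (fun y => (Real.sqrt (dot (c y) (c y)))⁻¹ • c y) 0 x := by
    intro x
    have hq : HasDerivAt (fun y => dot (c y) (c y))
        (2 * (μ x * dot (c x) (c x))) x := by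
      have := hasDerivAt_dot (hcd x) (hcd x)
      convert this using 1
      rw [dot_smul_left, dot_smul_right]
      ring
    have hs := (Real.hasDerivAt_sqrt (ne_of_gt (hqpos x))).comp x hq
    have hinv := hs.inv (ne_of_gt (hspos x))
    have hsmul := hinv.smul (hcd x)
    convert hsmul using 1
    · rfl
    · rfl
    · rfl
    · rfl
    rw [smul_smul, ← add_smul]
    symm
    convert zero_smul ℝ (c x)
    have h1 : Real.sqrt (dot (c x) (c x)) ≠ 0 := ne_of_gt (hspos x)
    have h2 : Real.sqrt (dot (c x) (c x)) ^ 2 = dot (c x) (c x) :=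
      Real.sq_sqrt (le_of_lt (hqpos x))
    simp only [Pi.inv_apply, Function.comp_apply]
    field_simp
    linear_combination (μ x) * h2
  exact fun x y =>
    is_const_of_deriv_eq_zero (fun z => (hγ z).differentiableAt)
      (fun z => (hγ z).deriv) x y

/-- Corollary 1: stationary solutions of the rescaled flow are plane curves
(through the origin): v·γ ≡ 0 and v lies in a plane through the origin. -/
theorem stationary_is_planar (v : ℝ → E3)
    (hsmooth : ContDiff ℝ (⊤ : ℕ∞) v)
    (hper : ∀ x, v (x + 2 * Real.pi) = v x)
    (hne : ∀ x, deriv v x ≠ 0)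
    (hne2 : ∀ x, cross (deriv (deriv v) x) (deriv v x) ≠ 0)
    (hstat : ∀ x, (1 / 2 : ℝ) • v x +
      (‖deriv v x‖ ^ 4)⁻¹ •
        cross (deriv v x) (cross (deriv (deriv v) x) (deriv v x)) = 0) :
    (∀ x, dot (v x)
        (‖cross (deriv (deriv v) x) (deriv v x)‖⁻¹ •
          cross (deriv (deriv v) x) (deriv v x)) = 0) ∧
    ∃ w : E3, ‖w‖ = 1 ∧ ∀ x, dot (v x) w = 0 := by
  -- differentiability of the iterated derivatives
  have hsm0 := contDiff_infty_iff_deriv.mp (hsmooth.of_le (by simp))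
  have hsm1 := contDiff_infty_iff_deriv.mp hsm0.2
  have hsm2 := contDiff_infty_iff_deriv.mp hsm1.2
  have hv : ∀ x, HasDerivAt v (deriv v x) x := fun x => (hsm0.1 x).hasDerivAt
  have hv1 : ∀ x, HasDerivAt (deriv v) (deriv (deriv v) x) x :=
    fun x => (hsm1.1 x).hasDerivAt
  have hv2 : ∀ x, HasDerivAt (deriv (deriv v)) (deriv (deriv (deriv v)) x) x :=
    fun x => (hsm2.1 x).hasDerivAt
  -- derivative of c = v'' × v'
  have hc : ∀ x, HasDerivAt (fun y => cross (deriv (deriv v) y) (deriv v y))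
      (cross (deriv (deriv (deriv v)) x) (deriv v x)) x := by
    intro x
    have := hasDerivAt_cross (hv2 x) (hv1 x)
    simpa [crossE3_self] using this
  -- v is proportional to v' × (v'' × v')
  have hk : ∀ x, v x = (-2 * (‖deriv v x‖ ^ 4)⁻¹) •
      cross (deriv v x) (cross (deriv (deriv v) x) (deriv v x)) := by
    intro x
    have h := hstat x
    have h2 : v x + (2 * (‖deriv v x‖ ^ 4)⁻¹) •
        cross (deriv v x) (cross (deriv (deriv v) x) (deriv v x)) = 0 := by
      have h3 := congrArg (fun y => (2:ℝ) • y) h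
      simpa [smul_add, smul_smul, show (2:ℝ) * (1/2) = 1 by norm_num] using h3
    have h4 := eq_neg_of_add_eq_zero_left h2
    rw [h4, ← neg_smul, ← neg_mul]
  -- basic orthogonality relations
  have hvc : ∀ x, dot (v x) (cross (deriv (deriv v) x) (deriv v x)) = 0 := by
    intro x; rw [hk x, dot_smul_left, dot_cross_right, mul_zero]
  have hvv1 : ∀ x, dot (v x) (deriv v x) = 0 := by
    intro x; rw [hk x, dot_smul_left, dot_cross_left, mul_zero]
  have part1 : ∀ x, dot (v x)
      (‖cross (deriv (deriv v) x) (deriv v x)‖⁻¹ •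
        cross (deriv (deriv v) x) (deriv v x)) = 0 := by
    intro x; rw [dot_smul_right, hvc x, mul_zero]
  -- d/dx (v·c) = 0 gives v ⊥ c'
  have hvc' : ∀ x, dot (v x) (cross (deriv (deriv (deriv v)) x) (deriv v x)) = 0 := by
    intro x
    have hzero : (fun y => dot (v y) (cross (deriv (deriv v) y) (deriv v y)))
        = fun _ => (0:ℝ) := funext hvc
    have hd := hasDerivAt_dot (hv x) (hc x)
    have h0 : HasDerivAt (fun y => dot (v y) (cross (deriv (deriv v) y) (deriv v y)))
        0 x := by rw [hzero]; exact hasDerivAt_const x 0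
    have huniq := hd.unique h0
    have hv1c : dot (deriv v x) (cross (deriv (deriv v) x) (deriv v x)) = 0 := by
      rw [dot_comm]; exact dot_cross_right _ _
    linarith
  have hv1c' : ∀ x, dot (deriv v x) (cross (deriv (deriv (deriv v)) x) (deriv v x)) = 0 := by
    intro x; rw [dot_comm]; exact dot_cross_right _ _
  -- v never vanishes
  have hvne : ∀ x, v x ≠ 0 := by
    intro x hx
    have knz : (-2 * (‖deriv v x‖ ^ 4)⁻¹ : ℝ) ≠ 0 := by
      have hn : ‖deriv v x‖ ≠ 0 := norm_ne_zero_iff.mpr (hne x)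
      have : (‖deriv v x‖ ^ 4)⁻¹ ≠ 0 := by positivity
      simpa using this
    have h5 := (hk x).symm
    rw [hx] at h5
    have hcr : cross (deriv v x) (cross (deriv (deriv v) x) (deriv v x)) = 0 :=
      (smul_eq_zero.mp h5).resolve_left knz
    have hl := lagrange (deriv v x) (cross (deriv (deriv v) x) (deriv v x))
    rw [hcr] at hl
    have h6 : dot (deriv v x) (cross (deriv (deriv v) x) (deriv v x)) = 0 := by
      rw [dot_comm]; exact dot_cross_right _ _
    rw [h6] at hl
    have h7 : dot (0 : E3) (0 : E3) = 0 := by simp [dot]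
    rw [h7] at hl
    have p1 := dot_self_pos (hne x)
    have p2 := dot_self_pos (hne2 x)
    nlinarith
  -- c' is proportional to c
  have hexists : ∀ x, ∃ m : ℝ, cross (deriv (deriv (deriv v)) x) (deriv v x)
      = m • cross (deriv (deriv v) x) (deriv v x) := by
    intro x
    refine prop_of_biorth (v x) (deriv v x) _ _ (hvne x) (hne x) (hne2 x)
      (hvv1 x) ?_ (dot_cross_right _ _) ?_ ?_
    · rw [dot_comm]; exact hvc x
    · rw [dot_comm]; exact hvc' x
    · rw [dot_comm]; exact hv1c' x
  -- the unit binormal is constant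
  set μ : ℝ → ℝ := fun x => Classical.choose (hexists x) with hμdef
  have hcd : ∀ x, HasDerivAt (fun y => cross (deriv (deriv v) y) (deriv v y))
      (μ x • cross (deriv (deriv v) x) (deriv v x)) x := by
    intro x
    have := Classical.choose_spec (hexists x)
    rw [hμdef]
    rw [← this]
    exact hc x
  have hconst := unit_const hcd hne2
  have hnorm : ∀ x, ‖cross (deriv (deriv v) x) (deriv v x)‖
      = Real.sqrt (dot (cross (deriv (deriv v) x) (deriv v x))
          (cross (deriv (deriv v) x) (deriv v x))) := fun x => norm_eq_sqrt_dot _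
  refine ⟨part1, ⟨‖cross (deriv (deriv v) 0) (deriv v 0)‖⁻¹ •
      cross (deriv (deriv v) 0) (deriv v 0), ?_, ?_⟩⟩
  · rw [norm_smul]
    have h8 : ‖cross (deriv (deriv v) 0) (deriv v 0)‖ ≠ 0 :=
      norm_ne_zero_iff.mpr (hne2 0)
    rw [norm_inv, Real.norm_eq_abs, abs_norm]
    field_simp
  · intro x
    have h9 : (‖cross (deriv (deriv v) 0) (deriv v 0)‖⁻¹ •
        cross (deriv (deriv v) 0) (deriv v 0))
        = ‖cross (deriv (deriv v) x) (deriv v x)‖⁻¹ •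
          cross (deriv (deriv v) x) (deriv v x) := by
      rw [hnorm 0, hnorm x]
      exact hconst 0 x
    rw [h9]
    exact part1 x
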